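/- arXiv:2008.10373 — 2 statements merged into one kernel-verified Lean document; each statement's English description precedes it below -/
import Mathlib

section
/- The ILP gadget correctly excludes strictly monotone cycles: let (l_e)_{e∈E(C)} be integers with |l_e| ≤ m, let M > m·|E(C)|, and let z, (x_e), (y_e) be 0/1 variables satisfying Σ l_e ≤ M(1−z), Σ l_e ≥ −M(1−z), Σ x_e + z ≥ 1, Σ y_e + z ≥ 1, l_e ≤ −1 + M(1−x_e) and l_e ≥ 1 − M(1−y_e) for all e. Then either Σ_{e} l_e = 0 and z = 1, or there exist e⁻ with l_{e⁻} ≤ −1 and e⁺ with l_{e⁺} ≥ 1. In particular, the labels (l_e) are not strictly monotone (not all of one strict sign with nonzero sum). -/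
open Finset

/-!
If `z = 0`, the cover constraints force some `x_e = 1` and some `y_f = 1`, and for these the
big-M constraints collapse to `l_e ≤ -1` and `1 ≤ l_f`. If `z = 1`, the two sum constraints
pinch `∑ l_e` to `0`.
-/

lemma Fintype.exists_eq_one_of_sum_ne_zero {ι R : Type*} [Fintype ι] [AddCommMonoid R] [One R]
    {x : ι → R} (hx : ∀ i, x i = 0 ∨ x i = 1) (h : ∑ i, x i ≠ 0) : ∃ i, x i = 1 := by
  obtain ⟨i, -, hi⟩ := Finset.exists_ne_zero_of_sum_ne_zero h
  exact ⟨i, (hx i).resolve_left hi⟩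

lemma not_strictly_monotone_of_sum_eq_zero_or_mixed_signs {ι : Type*} [Fintype ι] {l : ι → ℤ}
    (h : ∑ e, l e = 0 ∨ (∃ em, l em ≤ -1) ∧ ∃ ep, 1 ≤ l ep) :
    ¬(∑ e, l e ≠ 0 ∧ ¬((∃ em, l em < 0) ∧ ∃ ep, 0 < l ep)) := by
  rintro ⟨hsum, hmono⟩
  rcases h with hzero | ⟨⟨em, hem⟩, ep, hep⟩
  · exact hsum hzero
  · exact hmono ⟨⟨em, by omega⟩, ep, by omega⟩

theorem ilp_gadget_excludes_monotone_general
    {E : Type*} [Fintype E]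
    (M : ℤ)
    (l x y : E → ℤ) (z : ℤ)
    (hz : z = 0 ∨ z = 1)
    (hx : ∀ e, x e = 0 ∨ x e = 1)
    (hy : ∀ e, y e = 0 ∨ y e = 1)
    (c1 : ∑ e, l e ≤ M * (1 - z))
    (c2 : -(M * (1 - z)) ≤ ∑ e, l e)
    (c3 : 1 ≤ (∑ e, x e) + z)
    (c4 : 1 ≤ (∑ e, y e) + z)
    (c5 : ∀ e, l e ≤ -1 + M * (1 - x e))
    (c6 : ∀ e, 1 - M * (1 - y e) ≤ l e) :
    (((∑ e, l e) = 0 ∧ z = 1) ∨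
      ((∃ em, l em ≤ -1) ∧ (∃ ep, 1 ≤ l ep))) ∧
    ¬((∑ e, l e) ≠ 0 ∧ ¬((∃ em, l em < 0) ∧ (∃ ep, 0 < l ep))) := by
  have key : ((∑ e, l e) = 0 ∧ z = 1) ∨ ((∃ em, l em ≤ -1) ∧ (∃ ep, 1 ≤ l ep)) := by
    rcases hz with rfl | rfl
    · obtain ⟨em, hem⟩ := Fintype.exists_eq_one_of_sum_ne_zero hx (by omega)
      obtain ⟨ep, hep⟩ := Fintype.exists_eq_one_of_sum_ne_zero hy (by omega)
      have hneg : l em ≤ -1 := by simpa [hem] using c5 em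
      have hpos : 1 ≤ l ep := by simpa [hep] using c6 ep
      exact Or.inr ⟨⟨em, hneg⟩, ep, hpos⟩
    · simp only [sub_self, mul_zero, neg_zero] at c1 c2
      exact Or.inl ⟨le_antisymm c1 c2, rfl⟩
  exact ⟨key, not_strictly_monotone_of_sum_eq_zero_or_mixed_signs (key.imp_left And.left)⟩

/-- The ILP gadget correctly excludes strictly monotone cycles: let
`(l_e)` be integers with `|l_e| ≤ m`, let `M > m · |E(C)|`, and let `z, (x_e), (y_e)` be
0/1 variables satisfying the six families of constraints.  Then either `∑ l_e = 0` and
`z = 1`, or there exist `e⁻` with `l_{e⁻} ≤ -1` and `e⁺` with `l_{e⁺} ≥ 1`.  In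
particular, the labels are not strictly monotone (not all of one strict sign with
nonzero sum). -/
theorem ilp_gadget_excludes_monotone
    {E : Type*} [Fintype E] [Nonempty E]
    (m M : ℤ) (hm : 1 ≤ m) (hM : m * (Fintype.card E : ℤ) < M)
    (l x y : E → ℤ) (z : ℤ)
    (hl : ∀ e, |l e| ≤ m)
    (hz : z = 0 ∨ z = 1)
    (hx : ∀ e, x e = 0 ∨ x e = 1)
    (hy : ∀ e, y e = 0 ∨ y e = 1)
    (c1 : ∑ e, l e ≤ M * (1 - z))
    (c2 : -(M * (1 - z)) ≤ ∑ e, l e)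
    (c3 : 1 ≤ (∑ e, x e) + z)
    (c4 : 1 ≤ (∑ e, y e) + z)
    (c5 : ∀ e, l e ≤ -1 + M * (1 - x e))
    (c6 : ∀ e, 1 - M * (1 - y e) ≤ l e) :
    (((∑ e, l e) = 0 ∧ z = 1) ∨
      ((∃ em, l em ≤ -1) ∧ (∃ ep, 1 ≤ l ep))) ∧
    ¬((∑ e, l e) ≠ 0 ∧ ¬((∃ em, l em < 0) ∧ (∃ ep, 0 < l ep))) :=
  ilp_gadget_excludes_monotone_general M l x y z hz hx hy c1 c2 c3 c4 c5 c6
end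

section
/- Conversely, the ILP gadget is always satisfiable for non-strictly-monotone label vectors: if integers (l_e)_{e∈E(C)} with |l_e| ≤ m satisfy either (a) l_e = 0 for all e, or (b) there exist e⁻, e⁺ with l_{e⁻} < 0 < l_{e⁺}, then there exist 0/1 values z, (x_e), (y_e) satisfying all six families of constraints with M > m·|E(C)|. -/
open Finset

/-!
If all labels vanish, switching the gadget off (`z = 1`, all `x_e = y_e = 0`) works. If there
is a negative label at `e⁻` and a positive one at `e⁺`, switch it on (`z = 0`) and select
`x = 𝟙_{e⁻}`, `y = 𝟙_{e⁺}`. In both cases every constraint that is not tight by choice is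
relaxed by a big-`M` term, and `M > m · |E|` dominates both each `|l_e|` and `|∑ l_e|`.
-/

theorem abs_sum_le_card_nsmul {ι G : Type*} [Fintype ι] [AddCommGroup G] [LinearOrder G]
    [IsOrderedAddMonoid G] {f : ι → G} {m : G} (hf : ∀ i, |f i| ≤ m) :
    |∑ i, f i| ≤ Fintype.card ι • m :=
  (abs_sum_le_sum_abs f univ).trans <| sum_le_card_nsmul univ _ m fun i _ => hf i

section Gadget

variable {E : Type*} [Fintype E]

structure IsGadgetSolution (M : ℤ) (l : E → ℤ) (z : ℤ) (x y : E → ℤ) : Prop where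
  z_binary : z = 0 ∨ z = 1
  x_binary : ∀ e, x e = 0 ∨ x e = 1
  y_binary : ∀ e, y e = 0 ∨ y e = 1
  sum_le : ∑ e, l e ≤ M * (1 - z)
  neg_le_sum : -(M * (1 - z)) ≤ ∑ e, l e
  one_le_sum_x : 1 ≤ (∑ e, x e) + z
  one_le_sum_y : 1 ≤ (∑ e, y e) + z
  le_of_x : ∀ e, l e ≤ -1 + M * (1 - x e)
  le_of_y : ∀ e, 1 - M * (1 - y e) ≤ l e

theorem abs_lt_of_abs_le_of_mul_card_lt {m M : ℤ} {l : E → ℤ} (hl : ∀ e, |l e| ≤ m)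
    (hM : m * Fintype.card E < M) (e : E) : |l e| < M := by
  have hcard : (1 : ℤ) ≤ Fintype.card E := by
    exact_mod_cast Fintype.card_pos_iff.mpr ⟨e⟩
  have hm : 0 ≤ m := (abs_nonneg _).trans (hl e)
  calc |l e| ≤ m := hl e
    _ ≤ m * Fintype.card E := le_mul_of_one_le_right hm hcard
    _ < M := hM

theorem isGadgetSolution_off {M : ℤ} {l : E → ℤ} (hlM : ∀ e, |l e| < M) (hl : ∀ e, l e = 0) :
    IsGadgetSolution M l 1 0 0 := by
  have hsum : ∑ e, l e = 0 := sum_eq_zero fun e _ => hl e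
  have hM (e : E) : 0 < M := by simpa [hl e] using hlM e
  refine ⟨.inr rfl, fun _ => .inl rfl, fun _ => .inl rfl, by simp [hsum], by simp [hsum], by simp,
    by simp, fun e => ?_, fun e => ?_⟩ <;>
  · rw [hl e, Pi.zero_apply]; linarith [hM e]

theorem isGadgetSolution_on [DecidableEq E] {M : ℤ} {l : E → ℤ} (hsum : |∑ e, l e| ≤ M)
    (hlM : ∀ e, |l e| < M) {em ep : E} (hem : l em < 0) (hep : 0 < l ep) :
    IsGadgetSolution M l 0 (Pi.single em 1) (Pi.single ep 1) := by
  have single_binary (e₀ e : E) :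
      (Pi.single e₀ 1 : E → ℤ) e = 0 ∨ (Pi.single e₀ 1 : E → ℤ) e = 1 := by
    by_cases he : e = e₀ <;> simp [he]
  refine ⟨.inl rfl, single_binary em, single_binary ep, ?_, ?_, ?_, ?_, fun e => ?_, fun e => ?_⟩
  · simpa using (abs_le.mp hsum).2
  · simpa using (abs_le.mp hsum).1
  · simp
  · simp
  · by_cases he : e = em
    · rw [he, Pi.single_eq_same]; omega
    · rw [Pi.single_eq_of_ne he]; linarith [(abs_lt.mp (hlM e)).2]
  · by_cases he : e = ep
    · rw [he, Pi.single_eq_same]; omega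
    · rw [Pi.single_eq_of_ne he]; linarith [(abs_lt.mp (hlM e)).1]

end Gadget

theorem ilp_gadget_satisfiable_general
    {E : Type*} [Fintype E]
    (m M : ℤ) (hM : m * (Fintype.card E : ℤ) < M)
    (l : E → ℤ) (hl : ∀ e, |l e| ≤ m)
    (h : (∀ e, l e = 0) ∨ (∃ em ep, l em < 0 ∧ 0 < l ep)) :
    ∃ (z : ℤ) (x y : E → ℤ),
      (z = 0 ∨ z = 1) ∧
      (∀ e, x e = 0 ∨ x e = 1) ∧
      (∀ e, y e = 0 ∨ y e = 1) ∧
      (∑ e, l e ≤ M * (1 - z)) ∧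
      (-(M * (1 - z)) ≤ ∑ e, l e) ∧
      (1 ≤ (∑ e, x e) + z) ∧
      (1 ≤ (∑ e, y e) + z) ∧
      (∀ e, l e ≤ -1 + M * (1 - x e)) ∧
      (∀ e, 1 - M * (1 - y e) ≤ l e) := by
  classical
  have hlM := abs_lt_of_abs_le_of_mul_card_lt hl hM
  have hsum : |∑ e, l e| ≤ M := calc
    |∑ e, l e| ≤ Fintype.card E • m := abs_sum_le_card_nsmul hl
    _ = m * Fintype.card E := by rw [nsmul_eq_mul, mul_comm]
    _ ≤ M := hM.le
  obtain ⟨z, x, y, hs⟩ : ∃ z x y, IsGadgetSolution M l z x y := by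
    rcases h with hl0 | ⟨em, ep, hem, hep⟩
    · exact ⟨1, 0, 0, isGadgetSolution_off hlM hl0⟩
    · exact ⟨0, _, _, isGadgetSolution_on hsum hlM hem hep⟩
  exact ⟨z, x, y, hs.z_binary, hs.x_binary, hs.y_binary, hs.sum_le, hs.neg_le_sum,
    hs.one_le_sum_x, hs.one_le_sum_y, hs.le_of_x, hs.le_of_y⟩

/-- Conversely, the ILP gadget is always satisfiable for
non-strictly-monotone label vectors: if integers `(l_e)` with `|l_e| ≤ m` satisfy either
(a) `l_e = 0` for all `e`, or (b) there exist `e⁻, e⁺` with `l_{e⁻} < 0 < l_{e⁺}`, then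
there exist 0/1 values `z, (x_e), (y_e)` satisfying all six families of constraints,
with `M > m · |E(C)|`. -/
theorem ilp_gadget_satisfiable
    {E : Type*} [Fintype E] [Nonempty E] [DecidableEq E]
    (m M : ℤ) (hm : 1 ≤ m) (hM : m * (Fintype.card E : ℤ) < M)
    (l : E → ℤ) (hl : ∀ e, |l e| ≤ m)
    (h : (∀ e, l e = 0) ∨ (∃ em ep, l em < 0 ∧ 0 < l ep)) :
    ∃ (z : ℤ) (x y : E → ℤ),
      (z = 0 ∨ z = 1) ∧
      (∀ e, x e = 0 ∨ x e = 1) ∧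
      (∀ e, y e = 0 ∨ y e = 1) ∧
      (∑ e, l e ≤ M * (1 - z)) ∧
      (-(M * (1 - z)) ≤ ∑ e, l e) ∧
      (1 ≤ (∑ e, x e) + z) ∧
      (1 ≤ (∑ e, y e) + z) ∧
      (∀ e, l e ≤ -1 + M * (1 - x e)) ∧
      (∀ e, 1 - M * (1 - y e) ≤ l e) :=
  ilp_gadget_satisfiable_general m M hM l hl h
end
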